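/- arXiv:2505.08572 — 2 statements merged into one kernel-verified Lean document; each statement's English description precedes it below -/
import Mathlib

section
/- Let a > β > 0, and suppose a compact set W in a Banach space Y satisfies: every f ∈ W can be written f = Σ_{n=1}^∞ f_n with f_n in a subset A_n ⊆ Y whose entropy numbers satisfy ε_j(A_n, Y) ≤ C · 2^{-an} · (2^n / (j+1))^β for all j ≤ 2^{n+1} and ε_j(A_n, Y) ≤ C · 2^{-an} · 2^{-j/2^{n+1}} for j ≥ 2^{n+1}. Then there is a constant C' (depending only on a, β, C) such that ε_k(W, Y) ≤ C' k^{-a} for all k ≥ 1. -/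
/-!
Fix a scale `N` and resolve `f = ∑ fₙ ∈ W` only up to the level `M ≈ aN / (a - β)`. For `n ≤ N`
the exponential entropy bound covers `Aₙ` by `2 ^ (2ⁿ⁺¹ (1 + A₁ (N - n)))` balls of radius
`≲ 2 ^ (-aN + n - N)`; for `N < n ≤ M` the polynomial bound covers it by
`2 ^ ⌊2 ^ (N - θ (n - N))⌋` balls of radius `≲ 2 ^ (-aN - (a - β (1 + θ)) (n - N))`. Radii and
exponents are geometric in the distance from `N`, so they sum to `O(2 ^ (-aN))` and `O(2ᴺ)`.
Since `ε₀(Aₙ) ≤ C 2 ^ ((β - a) n)`, the remainders `∑_{n > M} fₙ` of all `f ∈ W` lie in one ball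
of radius `O(2 ^ ((β - a) M)) = O(2 ^ (-aN))`. Summing the covers gives `ε_k(W) = O(2 ^ (-aN))`
for `k ≈ 2ᴺ`.
-/

open ENNReal Filter

/-- The `k`-th entropy number of a set `A` in a normed space `X`. -/
noncomputable def entropyNum {X : Type*} [SeminormedAddCommGroup X] (k : ℕ) (A : Set X) : ℝ≥0∞ :=
  ⨅ (ε : ℝ≥0∞) (_ : ∃ T : Finset X, T.card ≤ 2 ^ k ∧ ∀ a ∈ A, ∃ y ∈ T, edist a y ≤ ε), ε

open Finset Topology Pointwise

section Covering

variable {X : Type*} [SeminormedAddCommGroup X]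

def CoverableBy (A : Set X) (k : ℕ) (r : ℝ) : Prop :=
  ∃ T : Finset X, T.card ≤ 2 ^ k ∧ ∀ x ∈ A, ∃ y ∈ T, dist x y ≤ r

variable {A B : Set X} {k l : ℕ} {r s : ℝ}

theorem CoverableBy.mono (h : CoverableBy A k r) (hBA : B ⊆ A) (hkl : k ≤ l) (hrs : r ≤ s) :
    CoverableBy B l s := by
  obtain ⟨T, hT, hcov⟩ := h
  refine ⟨T, hT.trans (Nat.pow_le_pow_right two_pos hkl), fun x hx => ?_⟩
  obtain ⟨y, hy, hxy⟩ := hcov x (hBA hx)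
  exact ⟨y, hy, hxy.trans hrs⟩

theorem coverableBy_zero_of_forall_dist_le (h : ∀ x ∈ A, ∀ y ∈ A, dist x y ≤ r) :
    CoverableBy A 0 r := by
  classical
  rcases A.eq_empty_or_nonempty with rfl | ⟨x₀, hx₀⟩
  · exact ⟨∅, by simp, by simp⟩
  · exact ⟨{x₀}, by simp, fun x hx => ⟨x₀, mem_singleton_self x₀, h x hx x₀ hx₀⟩⟩

theorem CoverableBy.dist_le (h : CoverableBy A 0 r) : ∀ x ∈ A, ∀ y ∈ A, dist x y ≤ 2 * r := by
  obtain ⟨T, hT, hcov⟩ := h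
  intro x hx y hy
  obtain ⟨u, hu, hxu⟩ := hcov x hx
  obtain ⟨v, hv, hyv⟩ := hcov y hy
  obtain rfl : u = v := Finset.card_le_one.1 (by simpa using hT) u hu v hv
  linarith [dist_triangle_right x y u]

theorem CoverableBy.add (hA : CoverableBy A k r) (hB : CoverableBy B l s) :
    CoverableBy (A + B) (k + l) (r + s) := by
  classical
  obtain ⟨T, hT, hcovT⟩ := hA
  obtain ⟨U, hU, hcovU⟩ := hB
  refine ⟨T + U, card_add_le.trans ?_, ?_⟩
  · rw [pow_add]; exact Nat.mul_le_mul hT hU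
  · rintro _ ⟨x, hx, y, hy, rfl⟩
    obtain ⟨u, hu, hxu⟩ := hcovT x hx
    obtain ⟨v, hv, hyv⟩ := hcovU y hy
    exact ⟨u + v, add_mem_add hu hv, (dist_add_add_le x y u v).trans (add_le_add hxu hyv)⟩

theorem coverableBy_sum {ι : Type*} {s : Finset ι} {A : ι → Set X} {k : ι → ℕ} {r : ι → ℝ}
    (h : ∀ i ∈ s, CoverableBy (A i) (k i) (r i)) :
    CoverableBy (∑ i ∈ s, A i) (∑ i ∈ s, k i) (∑ i ∈ s, r i) := by
  classical
  induction s using Finset.induction_on with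
  | empty => exact ⟨{0}, by simp, by simp⟩
  | insert i s hi ih =>
    rw [sum_insert hi, sum_insert hi, sum_insert hi]
    exact (h i (mem_insert_self i s)).add (ih fun j hj => h j (mem_insert_of_mem hj))

theorem entropyNum_le_of_coverableBy (h : CoverableBy A k r) :
    entropyNum k A ≤ ENNReal.ofReal r := by
  obtain ⟨T, hT, hcov⟩ := h
  refine iInf₂_le _ ⟨T, hT, fun x hx => ?_⟩
  obtain ⟨y, hy, hxy⟩ := hcov x hx
  exact ⟨y, hy, edist_dist x y ▸ ENNReal.ofReal_le_ofReal hxy⟩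

theorem coverableBy_of_entropyNum_lt (h : entropyNum k A < ENNReal.ofReal r) :
    CoverableBy A k r := by
  obtain ⟨ε, hε⟩ := iInf_lt_iff.1 h
  obtain ⟨⟨T, hT, hcov⟩, hεr⟩ := iInf_lt_iff.1 hε
  refine ⟨T, hT, fun x hx => ?_⟩
  obtain ⟨y, hy, hxy⟩ := hcov x hx
  exact ⟨y, hy, (edist_lt_ofReal.1 (hxy.trans_lt hεr)).le⟩

theorem coverableBy_two_mul_of_entropyNum_le (h : entropyNum k A ≤ ENNReal.ofReal r)
    (hr : 0 < r) : CoverableBy A k (2 * r) :=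
  coverableBy_of_entropyNum_lt <|
    h.trans_lt <| (ENNReal.ofReal_lt_ofReal_iff (by positivity)).2 (by linarith)

theorem entropyNum_le_of_forall_coverableBy {W : Set X} {D : ℕ} {R a : ℝ} (hD : 0 < D)
    (ha : 0 ≤ a) (hR : 0 ≤ R)
    (hW : ∀ N : ℕ, CoverableBy W (D * (2 ^ N - 1)) (R * (2 : ℝ) ^ (-(a * N)))) (hk : 1 ≤ k) :
    entropyNum k W ≤ ENNReal.ofReal (R * (2 * D) ^ a * (k : ℝ) ^ (-a)) := by
  set N := Nat.log 2 (k / D + 1)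
  have hcard : D * (2 ^ N - 1) ≤ k := by
    have : 2 ^ N ≤ k / D + 1 := Nat.pow_log_le_self 2 (Nat.succ_ne_zero _)
    calc D * (2 ^ N - 1) ≤ D * (k / D) := Nat.mul_le_mul_left _ (Nat.sub_le_of_le_add this)
      _ ≤ k := Nat.mul_div_le k D
  have hk_lt : k < D * 2 ^ (N + 1) := by
    have : k / D + 1 < 2 ^ (N + 1) := Nat.lt_pow_succ_log_self one_lt_two _
    rw [mul_comm]; exact (Nat.div_lt_iff_lt_mul hD).1 (by omega)
  have hkpos : (0 : ℝ) < k := by exact_mod_cast hk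
  have hscale : (2 : ℝ) ^ (-(a * N)) = (2 * D) ^ a / (2 * D * 2 ^ N) ^ a := by
    rw [Real.mul_rpow (x := 2 * D) (by positivity) (by positivity), ← Real.rpow_natCast 2 N,
      ← Real.rpow_mul zero_le_two, div_mul_eq_div_div, div_self (by positivity), one_div,
      ← Real.rpow_neg zero_le_two, mul_comm a]
  refine entropyNum_le_of_coverableBy ((hW N).mono subset_rfl hcard ?_)
  calc R * (2 : ℝ) ^ (-(a * N)) = R * ((2 * D) ^ a / (2 * D * 2 ^ N) ^ a) := by rw [hscale]
    _ ≤ R * ((2 * D) ^ a / (k : ℝ) ^ a) := by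
        gcongr
        calc (k : ℝ) ≤ ((D * 2 ^ (N + 1) : ℕ) : ℝ) := by exact_mod_cast hk_lt.le
          _ = 2 * D * 2 ^ N := by push_cast; ring
    _ = R * (2 * D) ^ a * (k : ℝ) ^ (-a) := by rw [Real.rpow_neg hkpos.le]; ring

end Covering

section Series

variable {E : Type*} [SeminormedAddCommGroup E]

theorem Nat.Icc_one_eq_Ioc_zero (K : ℕ) : Icc 1 K = Ioc 0 K := Icc_add_one_left_eq_Ioc 0 K

theorem dist_sub_sum_le_of_tendsto {g g' : ℕ → E} {f f' : E} {M : ℕ} {t : ℝ}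
    (hf : Tendsto (fun K => ∑ n ∈ Icc 1 K, g n) atTop (𝓝 f))
    (hf' : Tendsto (fun K => ∑ n ∈ Icc 1 K, g' n) atTop (𝓝 f'))
    (ht : ∀ K, ∑ n ∈ Ioc M K, dist (g n) (g' n) ≤ t) :
    dist (f - ∑ n ∈ Ioc 0 M, g n) (f' - ∑ n ∈ Ioc 0 M, g' n) ≤ t := by
  simp only [Nat.Icc_one_eq_Ioc_zero] at hf hf'
  refine le_of_tendsto ((hf.sub_const _).dist (hf'.sub_const _))
    (eventually_atTop.2 ⟨M, fun K hK => ?_⟩)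
  have hsplit (u : ℕ → E) : ∑ n ∈ Ioc 0 K, u n - ∑ n ∈ Ioc 0 M, u n = ∑ n ∈ Ioc M K, u n := by
    rw [← sum_Ioc_consecutive u (Nat.zero_le M) hK, add_sub_cancel_left]
  rw [hsplit, hsplit]
  exact (dist_sum_sum_le _ _ _).trans (ht K)

theorem coverableBy_of_tendsto_sum {W : Set E} {A : ℕ → Set E}
    (hW : ∀ f ∈ W, ∃ g : ℕ → E, (∀ n, 1 ≤ n → g n ∈ A n) ∧
      Tendsto (fun N => ∑ n ∈ Icc 1 N, g n) atTop (𝓝 f))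
    {d : ℕ → ℝ} (hd : ∀ n, 1 ≤ n → ∀ x ∈ A n, ∀ y ∈ A n, dist x y ≤ d n)
    {M : ℕ} {t : ℝ} (ht : ∀ K, ∑ n ∈ Ioc M K, d n ≤ t)
    {k : ℕ → ℕ} {r : ℕ → ℝ} (hk : ∀ n ∈ Ioc 0 M, CoverableBy (A n) (k n) (r n)) :
    CoverableBy W (∑ n ∈ Ioc 0 M, k n) (∑ n ∈ Ioc 0 M, r n + t) := by
  let IsDecomposition (f : E) (g : ℕ → E) : Prop :=
    (∀ n, 1 ≤ n → g n ∈ A n) ∧ Tendsto (fun N => ∑ n ∈ Icc 1 N, g n) atTop (𝓝 f)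
  let tails : Set E := {x | ∃ f g, IsDecomposition f g ∧ x = f - ∑ n ∈ Ioc 0 M, g n}
  have htails : CoverableBy tails 0 t := by
    refine coverableBy_zero_of_forall_dist_le ?_
    rintro _ ⟨f, g, ⟨hg, hf⟩, rfl⟩ _ ⟨f', g', ⟨hg', hf'⟩, rfl⟩
    refine dist_sub_sum_le_of_tendsto hf hf' fun K => (sum_le_sum fun n hn => ?_).trans (ht K)
    have hn : 1 ≤ n := Nat.one_le_of_lt (mem_Ioc.1 hn).1
    exact hd n hn _ (hg n hn) _ (hg' n hn)
  refine ((coverableBy_sum hk).add htails).mono (fun f hf => ?_) le_rfl le_rfl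
  obtain ⟨g, hg⟩ := hW f hf
  exact ⟨_, Set.finsetSum_mem_finsetSum _ _ g fun n hn => hg.1 n (mem_Ioc.1 hn).1, _,
    ⟨f, g, hg, rfl⟩, add_sub_cancel _ _⟩

end Series

theorem sum_Ioc_ite_le {α : Type*} [AddCommMonoid α] (u v : ℕ → α) {N K : ℕ} (hNK : N ≤ K) :
    ∑ n ∈ Ioc 0 K, (if n ≤ N then u n else v n) = ∑ n ∈ Ioc 0 N, u n + ∑ n ∈ Ioc N K, v n := by
  rw [← sum_Ioc_consecutive _ (Nat.zero_le N) hNK]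
  congr 1 <;> refine sum_congr rfl fun n hn => ?_
  · rw [if_pos (mem_Ioc.1 hn).2]
  · rw [if_neg (not_le.2 (mem_Ioc.1 hn).1)]

theorem sum_Ioc_pow_sub_le {q : ℝ} (h0 : 0 ≤ q) (h1 : q < 1) (N M : ℕ) :
    ∑ n ∈ Ioc N M, q ^ (n - N) ≤ (1 - q)⁻¹ := by
  rw [← Ico_add_one_add_one_eq_Ioc, sum_Ico_eq_sum_range]
  calc ∑ k ∈ range (M + 1 - (N + 1)), q ^ (N + 1 + k - N)
      ≤ ∑ k ∈ range (M + 1 - (N + 1)), q ^ k :=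
        sum_le_sum fun k _ => pow_le_pow_of_le_one h0 h1.le (by omega)
    _ ≤ (1 - q)⁻¹ := by
        simpa using geom_sum_Ico_le_of_lt_one (m := 0) (n := M + 1 - (N + 1)) h0 h1

theorem sum_Ioc_pow_le {q : ℝ} (h0 : 0 ≤ q) (h1 : q < 1) (M K : ℕ) :
    ∑ n ∈ Ioc M K, q ^ n ≤ q ^ M * (1 - q)⁻¹ := by
  calc ∑ n ∈ Ioc M K, q ^ n = q ^ M * ∑ n ∈ Ioc M K, q ^ (n - M) := by
        rw [mul_sum]
        exact sum_congr rfl fun n hn => by rw [← pow_add, Nat.add_sub_cancel' (mem_Ioc.1 hn).1.le]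
    _ ≤ q ^ M * (1 - q)⁻¹ := by gcongr; exact sum_Ioc_pow_sub_le h0 h1 M K

theorem sum_Ioc_two_pow_div_le (N : ℕ) : ∑ n ∈ Ioc 0 N, (2 : ℝ) ^ n / 2 ^ N ≤ 2 := by
  rw [← sum_div, div_le_iff₀ (by positivity)]
  calc ∑ n ∈ Ioc 0 N, (2 : ℝ) ^ n ≤ ∑ n ∈ range (N + 1), (2 : ℝ) ^ n :=
        sum_le_sum_of_subset_of_nonneg
          (fun n hn => by simp only [mem_Ioc, mem_range] at hn ⊢; omega) fun _ _ _ => by positivity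
    _ ≤ 2 * 2 ^ N := by rw [geom_sum_eq (by norm_num), pow_succ]; norm_num; linarith

theorem sum_range_two_pow_mul_sub (N : ℕ) :
    ∑ n ∈ range (N + 1), 2 ^ n * (N - n) + (N + 2) = 2 ^ (N + 1) := by
  induction N with
  | zero => simp
  | succ N ih =>
    have hterm (k : ℕ) : 2 ^ (k + 1) * (N + 1 - (k + 1)) = 2 ^ k * (N - k) * 2 := by
      rw [Nat.add_sub_add_right]; ring
    rw [sum_range_succ', pow_succ 2 (N + 1), ← ih]
    simp only [hterm, ← sum_mul, pow_zero, Nat.sub_zero]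
    ring

section Dyadic

variable {E : Type*} [SeminormedAddCommGroup E]

def lowCard (A₁ N n : ℕ) : ℕ := 2 ^ (n + 1) * (1 + A₁ * (N - n))

noncomputable def midCard (θ : ℝ) (N n : ℕ) : ℕ := ⌊(2 : ℝ) ^ ((N : ℝ) - θ * ((n : ℝ) - N))⌋₊

theorem sum_lowCard_le (A₁ N : ℕ) : ∑ n ∈ Ioc 0 N, lowCard A₁ N n ≤ 4 * (1 + A₁) * 2 ^ N := by
  have hgeom : ∑ n ∈ range (N + 1), 2 ^ n + 1 = 2 ^ (N + 1) := by
    rw [Nat.geomSum_eq le_rfl]; have := Nat.one_le_two_pow (n := N + 1); omega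
  have hweighted := sum_range_two_pow_mul_sub N
  calc ∑ n ∈ Ioc 0 N, lowCard A₁ N n ≤ ∑ n ∈ range (N + 1), lowCard A₁ N n :=
        sum_le_sum_of_subset fun n hn => by simp only [mem_Ioc, mem_range] at hn ⊢; omega
    _ = 2 * ∑ n ∈ range (N + 1), 2 ^ n + 2 * A₁ * ∑ n ∈ range (N + 1), 2 ^ n * (N - n) := by
        simp only [lowCard, mul_sum, ← sum_add_distrib]
        exact sum_congr rfl fun n _ => by ring
    _ ≤ 4 * (1 + A₁) * 2 ^ N := by
        rw [pow_succ] at hgeom hweighted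
        nlinarith

theorem sum_midCard_le {θ : ℝ} (hθ : 0 < θ) {B : ℕ} (hB : (1 - (2 : ℝ) ^ (-θ))⁻¹ ≤ B) (N M : ℕ) :
    ∑ n ∈ Ioc N M, midCard θ N n ≤ B * 2 ^ N := by
  have hq0 : 0 ≤ (2 : ℝ) ^ (-θ) := by positivity
  have hq1 : (2 : ℝ) ^ (-θ) < 1 := Real.rpow_lt_one_of_one_lt_of_neg one_lt_two (by linarith)
  have hterm : ∀ n ∈ Ioc N M, (midCard θ N n : ℝ) ≤ 2 ^ N * ((2 : ℝ) ^ (-θ)) ^ (n - N) := by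
    intro n hn
    have hNn : N ≤ n := (mem_Ioc.1 hn).1.le
    refine (Nat.floor_le (by positivity)).trans (le_of_eq ?_)
    rw [← Real.rpow_natCast _ (n - N), ← Real.rpow_natCast, ← Real.rpow_mul zero_le_two,
      ← Real.rpow_add two_pos, Nat.cast_sub hNn]
    ring_nf
  have hreal : (∑ n ∈ Ioc N M, midCard θ N n : ℝ) ≤ B * 2 ^ N :=
    calc (∑ n ∈ Ioc N M, midCard θ N n : ℝ) ≤ ∑ n ∈ Ioc N M, 2 ^ N * ((2 : ℝ) ^ (-θ)) ^ (n - N) :=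
          sum_le_sum hterm
      _ ≤ 2 ^ N * (1 - (2 : ℝ) ^ (-θ))⁻¹ := by
          rw [← mul_sum]; gcongr; exact sum_Ioc_pow_sub_le hq0 hq1 N M
      _ ≤ B * 2 ^ N := by rw [mul_comm]; gcongr
  exact_mod_cast hreal

theorem sum_dyadicCard_le {θ : ℝ} (hθ : 0 < θ) {A₁ B : ℕ} (hB : (1 - (2 : ℝ) ^ (-θ))⁻¹ ≤ B)
    {N M : ℕ} (hNM : N ≤ M) (hM : N = 0 → M = 0) :
    ∑ n ∈ Ioc 0 M, (if n ≤ N then lowCard A₁ N n else midCard θ N n) ≤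
      2 * (4 * (1 + A₁) + B) * (2 ^ N - 1) := by
  rcases Nat.eq_zero_or_pos N with hN | hN
  · simp [hM hN]
  have h2N : 2 ≤ 2 ^ N := Nat.le_self_pow hN.ne' 2
  calc ∑ n ∈ Ioc 0 M, (if n ≤ N then lowCard A₁ N n else midCard θ N n)
      ≤ 4 * (1 + A₁) * 2 ^ N + B * 2 ^ N := by
        rw [sum_Ioc_ite_le _ _ hNM]
        exact add_le_add (sum_lowCard_le A₁ N) (sum_midCard_le hθ hB N M)
    _ ≤ (4 * (1 + A₁) + B) * (2 * (2 ^ N - 1)) := by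
        rw [← add_mul]; exact Nat.mul_le_mul_left _ (by omega)
    _ = 2 * (4 * (1 + A₁) + B) * (2 ^ N - 1) := by ring

theorem midCard_le {θ : ℝ} {n N : ℕ} (hθ : 0 ≤ θ) (hNn : N ≤ n) : midCard θ N n ≤ 2 ^ (n + 1) := by
  refine Nat.floor_le_of_le ?_
  have hNn' : (N : ℝ) ≤ n := by exact_mod_cast hNn
  calc (2 : ℝ) ^ ((N : ℝ) - θ * ((n : ℝ) - N)) ≤ 2 ^ ((n + 1 : ℕ) : ℝ) :=
        Real.rpow_le_rpow_of_exponent_le one_le_two (by push_cast; nlinarith)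
    _ = _ := by rw [Real.rpow_natCast]; push_cast; ring

theorem two_mul_expBound_lowCard_le {a C : ℝ} {A₁ n N : ℕ} (hC : 0 ≤ C) (hA₁ : a + 1 ≤ A₁)
    (hnN : n ≤ N) :
    2 * (C * (2 : ℝ) ^ (-(a * n)) * (2 : ℝ) ^ (-(lowCard A₁ N n : ℝ) / 2 ^ (n + 1))) ≤
      C * (2 : ℝ) ^ (-(a * N)) * (2 ^ n / 2 ^ N) := by
  have hcard : -(lowCard A₁ N n : ℝ) / 2 ^ (n + 1) = -(1 + A₁ * ((N : ℝ) - n)) := by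
    rw [lowCard, Nat.cast_mul, Nat.cast_add, Nat.cast_mul, Nat.cast_sub hnN]
    field_simp
    push_cast
    ring
  have hlhs : 2 * (C * (2 : ℝ) ^ (-(a * n)) * (2 : ℝ) ^ (-(1 + A₁ * ((N : ℝ) - n)))) =
      C * (2 : ℝ) ^ (1 + -(a * n) + -(1 + A₁ * ((N : ℝ) - n))) := by
    rw [Real.rpow_add two_pos, Real.rpow_add two_pos, Real.rpow_one]; ring
  have hrhs : C * (2 : ℝ) ^ (-(a * N)) * (2 ^ n / 2 ^ N) =
      C * (2 : ℝ) ^ (-(a * N) + ((n : ℝ) - N)) := by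
    rw [Real.rpow_add two_pos, Real.rpow_sub two_pos, Real.rpow_natCast, Real.rpow_natCast,
      mul_assoc]
  rw [hcard, hlhs, hrhs]
  refine mul_le_mul_of_nonneg_left (Real.rpow_le_rpow_of_exponent_le one_le_two ?_) hC
  have hNn : (0 : ℝ) ≤ N - n := sub_nonneg.2 (by exact_mod_cast hnN)
  nlinarith [mul_le_mul_of_nonneg_right hA₁ hNn]

theorem two_mul_polyBound_midCard_le {a β θ C : ℝ} {n N : ℕ} (hβ : 0 ≤ β) (hC : 0 ≤ C)
    (hNn : N ≤ n) :
    2 * (C * (2 : ℝ) ^ (-(a * n)) * ((2 : ℝ) ^ n / ((midCard θ N n : ℝ) + 1)) ^ β) ≤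
      2 * C * (2 : ℝ) ^ (-(a * N)) * ((2 : ℝ) ^ (β * (1 + θ) - a)) ^ (n - N) := by
  set x : ℝ := (2 : ℝ) ^ ((N : ℝ) - θ * ((n : ℝ) - N))
  have hx : 0 < x := Real.rpow_pos_of_pos two_pos _
  have hratio : (2 : ℝ) ^ n / ((midCard θ N n : ℝ) + 1) ≤ 2 ^ ((1 + θ) * ((n : ℝ) - N)) := by
    calc (2 : ℝ) ^ n / ((midCard θ N n : ℝ) + 1) ≤ 2 ^ n / x :=
          div_le_div_of_nonneg_left (by positivity) hx (Nat.lt_floor_add_one x).le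
      _ = 2 ^ ((1 + θ) * ((n : ℝ) - N)) := by
          rw [← Real.rpow_natCast, ← Real.rpow_sub two_pos]; congr 1; ring
  calc 2 * (C * (2 : ℝ) ^ (-(a * n)) * ((2 : ℝ) ^ n / ((midCard θ N n : ℝ) + 1)) ^ β)
      ≤ 2 * (C * (2 : ℝ) ^ (-(a * n)) * ((2 : ℝ) ^ ((1 + θ) * ((n : ℝ) - N))) ^ β) := by
        gcongr
    _ = 2 * C * (2 : ℝ) ^ (-(a * N)) * ((2 : ℝ) ^ (β * (1 + θ) - a)) ^ (n - N) := by
        rw [← Real.rpow_natCast _ (n - N), Nat.cast_sub hNn, ← Real.rpow_mul zero_le_two,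
          ← Real.rpow_mul zero_le_two, mul_assoc C, ← Real.rpow_add two_pos,
          mul_assoc (2 * C), ← Real.rpow_add two_pos]
        ring_nf

theorem forall_dist_le_of_entropyNum_zero_le {A : Set E} {a β C : ℝ} {n : ℕ} (hC : 0 < C)
    (hA : entropyNum 0 A ≤ ENNReal.ofReal
      (C * (2 : ℝ) ^ (-(a * n)) * ((2 : ℝ) ^ n / (((0 : ℕ) : ℝ) + 1)) ^ β)) :
    ∀ x ∈ A, ∀ y ∈ A, dist x y ≤ 4 * C * ((2 : ℝ) ^ (β - a)) ^ n := by
  have hpow : (2 : ℝ) ^ (-(a * n)) * ((2 : ℝ) ^ n / (((0 : ℕ) : ℝ) + 1)) ^ β =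
      ((2 : ℝ) ^ (β - a)) ^ n := by
    rw [Nat.cast_zero, zero_add, div_one, ← Real.rpow_natCast, ← Real.rpow_natCast,
      ← Real.rpow_mul zero_le_two, ← Real.rpow_mul zero_le_two, ← Real.rpow_add two_pos]
    ring_nf
  rw [mul_assoc, hpow] at hA
  intro x hx y hy
  have := (coverableBy_two_mul_of_entropyNum_le hA (by positivity)).dist_le x hx y hy
  linarith

theorem coverableBy_of_dyadic_entropy_bounds {W : Set E} {A : ℕ → Set E} {a β C θ : ℝ} {A₁ B : ℕ}
    (hβ : 0 ≤ β) (hθ : 0 < θ) (hθa : β * (1 + θ) < a)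
    (hC : 0 < C) (hA₁ : a + 1 ≤ A₁) (hB : (1 - (2 : ℝ) ^ (-θ))⁻¹ ≤ B)
    (hW : ∀ f ∈ W, ∃ g : ℕ → E, (∀ n, 1 ≤ n → g n ∈ A n) ∧
      Tendsto (fun N => ∑ n ∈ Icc 1 N, g n) atTop (𝓝 f))
    (hA : ∀ n : ℕ, 1 ≤ n → ∀ j : ℕ,
      (j ≤ 2 ^ (n + 1) →
        entropyNum j (A n) ≤
          ENNReal.ofReal (C * (2 : ℝ) ^ (-(a * n)) * ((2 : ℝ) ^ n / ((j : ℝ) + 1)) ^ β)) ∧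
      (2 ^ (n + 1) ≤ j →
        entropyNum j (A n) ≤
          ENNReal.ofReal (C * (2 : ℝ) ^ (-(a * n)) * (2 : ℝ) ^ (-(j : ℝ) / 2 ^ (n + 1)))))
    (N : ℕ) :
    CoverableBy W (2 * (4 * (1 + A₁) + B) * (2 ^ N - 1))
      (2 * C * (1 + (1 - (2 : ℝ) ^ (β * (1 + θ) - a))⁻¹ + 2 * (1 - (2 : ℝ) ^ (β - a))⁻¹) *
        (2 : ℝ) ^ (-(a * N))) := by
  have hβa : β < a := by nlinarith
  set q := (2 : ℝ) ^ (β - a)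
  set q' := (2 : ℝ) ^ (β * (1 + θ) - a)
  set X := (2 : ℝ) ^ (-(a * N))
  have hq : 0 ≤ q ∧ q < 1 :=
    ⟨by positivity, Real.rpow_lt_one_of_one_lt_of_neg one_lt_two (by linarith)⟩
  have hq' : 0 ≤ q' ∧ q' < 1 :=
    ⟨by positivity, Real.rpow_lt_one_of_one_lt_of_neg one_lt_two (by linarith)⟩
  set M := max N ⌈a * N / (a - β)⌉₊
  have hqM : q ^ M ≤ X := by
    rw [← Real.rpow_natCast, ← Real.rpow_mul zero_le_two]
    refine Real.rpow_le_rpow_of_exponent_le one_le_two ?_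
    have hM : a * N / (a - β) ≤ M := (Nat.le_ceil _).trans (by exact_mod_cast le_max_right _ _)
    rw [div_le_iff₀ (by linarith)] at hM
    linarith
  have htail (K : ℕ) : ∑ n ∈ Ioc M K, 4 * C * q ^ n ≤ 4 * C * (1 - q)⁻¹ * X := by
    rw [← mul_sum]
    calc 4 * C * ∑ n ∈ Ioc M K, q ^ n ≤ 4 * C * (X * (1 - q)⁻¹) := by
          gcongr; exact (sum_Ioc_pow_le hq.1 hq.2 M K).trans
            (mul_le_mul_of_nonneg_right hqM (inv_nonneg.2 (by linarith [hq.2])))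
      _ = 4 * C * (1 - q)⁻¹ * X := by ring
  have hlevel : ∀ n ∈ Ioc 0 M, CoverableBy (A n)
      (if n ≤ N then lowCard A₁ N n else midCard θ N n)
      (if n ≤ N then C * X * (2 ^ n / 2 ^ N) else 2 * C * X * q' ^ (n - N)) := by
    intro n hn
    have hn1 : 1 ≤ n := (mem_Ioc.1 hn).1
    split_ifs with hnN
    · exact (coverableBy_two_mul_of_entropyNum_le ((hA n hn1 _).2
        (Nat.le_mul_of_pos_right _ (by omega))) (by positivity)).mono subset_rfl le_rfl
        (two_mul_expBound_lowCard_le hC.le hA₁ hnN)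
    · exact (coverableBy_two_mul_of_entropyNum_le ((hA n hn1 _).1
        (midCard_le hθ.le (by omega))) (by positivity)).mono subset_rfl le_rfl
        (two_mul_polyBound_midCard_le hβ hC.le (by omega))
  refine (coverableBy_of_tendsto_sum hW (fun n hn => forall_dist_le_of_entropyNum_zero_le hC
    ((hA n hn 0).1 (Nat.zero_le _))) htail hlevel).mono subset_rfl
    (sum_dyadicCard_le hθ hB (le_max_left _ _) fun hN => by simp [M, hN]) ?_
  rw [sum_Ioc_ite_le _ _ (le_max_left _ _), ← mul_sum, ← mul_sum]
  have hlow := sum_Ioc_two_pow_div_le N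
  have hmid := sum_Ioc_pow_sub_le hq'.1 hq'.2 N M
  have hCX : 0 ≤ C * X := by positivity
  calc C * X * ∑ n ∈ Ioc 0 N, (2 : ℝ) ^ n / 2 ^ N + 2 * C * X * ∑ n ∈ Ioc N M, q' ^ (n - N) +
        4 * C * (1 - q)⁻¹ * X
      ≤ C * X * 2 + 2 * C * X * (1 - q')⁻¹ + 4 * C * (1 - q)⁻¹ * X := by gcongr
    _ = _ := by ring

end Dyadic

theorem stmt_9 (a β C : ℝ) (hβ : 0 < β) (hβa : β < a) (hC : 0 < C) :
    ∃ C' : ℝ, 0 < C' ∧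
      ∀ (Y : Type) [NormedAddCommGroup Y] [NormedSpace ℝ Y] [CompleteSpace Y]
        (W : Set Y) (A : ℕ → Set Y), IsCompact W →
        (∀ f ∈ W, ∃ g : ℕ → Y, (∀ n, 1 ≤ n → g n ∈ A n) ∧
          Tendsto (fun N => ∑ n ∈ Finset.Icc 1 N, g n) atTop (nhds f)) →
        (∀ n : ℕ, 1 ≤ n → ∀ j : ℕ,
          (j ≤ 2 ^ (n + 1) →
            entropyNum j (A n) ≤
              ENNReal.ofReal (C * (2 : ℝ) ^ (-(a * n)) * ((2 : ℝ) ^ n / ((j : ℝ) + 1)) ^ β)) ∧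
          (2 ^ (n + 1) ≤ j →
            entropyNum j (A n) ≤
              ENNReal.ofReal (C * (2 : ℝ) ^ (-(a * n)) * (2 : ℝ) ^ (-(j : ℝ) / 2 ^ (n + 1))))) →
        ∀ k : ℕ, 1 ≤ k → entropyNum k W ≤ ENNReal.ofReal (C' * (k : ℝ) ^ (-a)) := by
  set θ := (a - β) / (2 * β)
  have hθ : 0 < θ := div_pos (by linarith) (by linarith)
  have hθa : β * (1 + θ) < a := by
    have : β * (1 + θ) = (a + β) / 2 := by simp only [θ]; field_simp; ring
    linarith
  have hq : 0 < (1 - (2 : ℝ) ^ (β - a))⁻¹ :=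
    inv_pos.2 (sub_pos.2 (Real.rpow_lt_one_of_one_lt_of_neg one_lt_two (by linarith)))
  have hq' : 0 < (1 - (2 : ℝ) ^ (β * (1 + θ) - a))⁻¹ :=
    inv_pos.2 (sub_pos.2 (Real.rpow_lt_one_of_one_lt_of_neg one_lt_two (by linarith)))
  set D : ℕ := 2 * (4 * (1 + ⌈a + 1⌉₊) + ⌈(1 - (2 : ℝ) ^ (-θ))⁻¹⌉₊)
  set R := 2 * C * (1 + (1 - (2 : ℝ) ^ (β * (1 + θ) - a))⁻¹ + 2 * (1 - (2 : ℝ) ^ (β - a))⁻¹)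
  have hR : 0 < R := by positivity
  refine ⟨R * (2 * D) ^ a, by positivity, fun Y _ _ _ W A _ hW hA k hk => ?_⟩
  exact entropyNum_le_of_forall_coverableBy (by positivity) (by linarith) hR.le
    (coverableBy_of_dyadic_entropy_bounds hβ.le hθ hθa hC (Nat.le_ceil _) (Nat.le_ceil _) hW hA) hk
end

section
/- (Nikol'skii inequality for trigonometric polynomials, 1 → ∞) Let t be a trigonometric polynomial on 𝕋 of degree at most n (n ≥ 1). Then ‖t‖_{L_∞(𝕋)} ≤ C n ‖t‖_{L_1(𝕋)} for an absolute constant C, where the L_1 norm uses the normalized measure (2π)^{-1}dx. -/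
/-! Integrating against `exp (-i j y)` shows that every coefficient of a trigonometric polynomial
is bounded by its normalized `L₁` norm. Since `|exp (i k x)| = 1`, the sup norm is at most the sum
of the `2n + 1 ≤ 3n` coefficient moduli. -/

open Real

noncomputable section

namespace TrigPoly

def eval (S : Finset ℤ) (c : ℤ → ℂ) (x : ℝ) : ℂ :=
  ∑ k ∈ S, c k * Complex.exp ((k : ℂ) * x * Complex.I)

lemma norm_exp_int_mul_I (k : ℤ) (x : ℝ) : ‖Complex.exp ((k : ℂ) * x * Complex.I)‖ = 1 := by
  rw [show (k : ℂ) * x * Complex.I = ((k * x : ℝ) : ℂ) * Complex.I by push_cast; ring]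
  exact Complex.norm_exp_ofReal_mul_I _

lemma continuous_exp_int_mul_I (k : ℤ) :
    Continuous fun y : ℝ => Complex.exp ((k : ℂ) * y * Complex.I) := by
  fun_prop

lemma integral_exp_int_mul_I (m : ℤ) :
    ∫ y in (0 : ℝ)..(2 * π), Complex.exp ((m : ℂ) * y * Complex.I) =
      if m = 0 then (2 * π : ℂ) else 0 := by
  split_ifs with hm
  · simp [hm, mul_comm]
  · have hc : (m : ℂ) * Complex.I ≠ 0 := by simp [hm]
    simp only [mul_right_comm _ _ Complex.I]
    rw [integral_exp_mul_complex hc,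
      show (m : ℂ) * Complex.I * ((2 * π : ℝ) : ℂ) = m * (2 * π * Complex.I) by push_cast; ring,
      Complex.exp_int_mul_two_pi_mul_I]
    simp

variable (S : Finset ℤ) (c : ℤ → ℂ)

lemma eval_mul_exp_neg (j : ℤ) (y : ℝ) :
    eval S c y * Complex.exp ((-j : ℂ) * y * Complex.I) =
      ∑ k ∈ S, c k * Complex.exp (((k - j : ℤ) : ℂ) * y * Complex.I) := by
  rw [eval, Finset.sum_mul]
  refine Finset.sum_congr rfl fun k _ => ?_
  rw [mul_assoc, ← Complex.exp_add]
  push_cast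
  ring_nf

lemma integral_eval_mul_exp_neg {j : ℤ} (hj : j ∈ S) :
    ∫ y in (0 : ℝ)..(2 * π), eval S c y * Complex.exp ((-j : ℂ) * y * Complex.I) =
      c j * (2 * π) := by
  simp only [eval_mul_exp_neg]
  rw [intervalIntegral.integral_finsetSum fun k _ => by
    exact (continuous_const.mul (continuous_exp_int_mul_I (k - j))).intervalIntegrable _ _]
  simp only [intervalIntegral.integral_const_mul, integral_exp_int_mul_I, sub_eq_zero,
    mul_ite, mul_zero, Finset.sum_ite_eq' S j, if_pos hj]

def meanNorm : ℝ := (2 * π)⁻¹ * ∫ y in (0 : ℝ)..(2 * π), ‖eval S c y‖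

lemma meanNorm_nonneg : 0 ≤ meanNorm S c :=
  mul_nonneg (by positivity)
    (intervalIntegral.integral_nonneg (by positivity) fun _ _ => norm_nonneg _)

lemma norm_coeff_le_meanNorm {j : ℤ} (hj : j ∈ S) : ‖c j‖ ≤ meanNorm S c := by
  have hπ : (0 : ℝ) < 2 * π := by positivity
  have hint : ‖c j‖ * (2 * π) ≤ ∫ y in (0 : ℝ)..(2 * π), ‖eval S c y‖ :=
    calc ‖c j‖ * (2 * π)
        = ‖∫ y in (0 : ℝ)..(2 * π), eval S c y * Complex.exp ((-j : ℂ) * y * Complex.I)‖ := by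
          rw [integral_eval_mul_exp_neg S c hj, norm_mul,
            show (2 * π : ℂ) = ((2 * π : ℝ) : ℂ) by push_cast; rfl,
            Complex.norm_real, Real.norm_of_nonneg hπ.le]
      _ ≤ ∫ y in (0 : ℝ)..(2 * π), ‖eval S c y * Complex.exp ((-j : ℂ) * y * Complex.I)‖ :=
          intervalIntegral.norm_integral_le_integral_norm hπ.le
      _ = ∫ y in (0 : ℝ)..(2 * π), ‖eval S c y‖ := by
          simp only [norm_mul, ← Int.cast_neg, norm_exp_int_mul_I, mul_one]
  rw [meanNorm, inv_mul_eq_div, le_div_iff₀ hπ]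
  exact hint

lemma norm_eval_le_card_mul_meanNorm (x : ℝ) : ‖eval S c x‖ ≤ S.card * meanNorm S c :=
  calc ‖eval S c x‖
      ≤ ∑ k ∈ S, ‖c k * Complex.exp ((k : ℂ) * x * Complex.I)‖ := norm_sum_le _ _
    _ = ∑ k ∈ S, ‖c k‖ := by simp only [norm_mul, norm_exp_int_mul_I, mul_one]
    _ ≤ ∑ _k ∈ S, meanNorm S c := Finset.sum_le_sum fun k hk => norm_coeff_le_meanNorm S c hk
    _ = S.card * meanNorm S c := by rw [Finset.sum_const, nsmul_eq_mul]

end TrigPoly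

end

theorem stmt_15 :
    ∃ C : ℝ, 0 < C ∧ ∀ n : ℕ, 1 ≤ n → ∀ c : ℤ → ℂ, ∀ x : ℝ,
      ‖∑ k ∈ Finset.Icc (-(n : ℤ)) (n : ℤ), c k * Complex.exp ((k : ℂ) * x * Complex.I)‖ ≤
        C * n * ((2 * π)⁻¹ * ∫ y in (0 : ℝ)..(2 * π),
          ‖∑ k ∈ Finset.Icc (-(n : ℤ)) (n : ℤ), c k * Complex.exp ((k : ℂ) * y * Complex.I)‖) := by
  refine ⟨3, by norm_num, fun n hn c x => ?_⟩
  set S := Finset.Icc (-(n : ℤ)) n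
  have hcard : (S.card : ℝ) ≤ 3 * n := by
    have : S.card = 2 * n + 1 := by simp only [S, Int.card_Icc]; omega
    rw [this]
    exact_mod_cast (by omega : 2 * n + 1 ≤ 3 * n)
  calc ‖TrigPoly.eval S c x‖
      ≤ S.card * TrigPoly.meanNorm S c := TrigPoly.norm_eval_le_card_mul_meanNorm S c x
    _ ≤ 3 * n * TrigPoly.meanNorm S c :=
        mul_le_mul_of_nonneg_right hcard (TrigPoly.meanNorm_nonneg S c)
end
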